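/- Suppose all entries A_{IJ}(t) are real and nonnegative and each t ↦ A_{IJ}(t) is continuous. Let u : [s,T] → C(K_N, ℝ) (continuous real-valued functions on K_N with the sup norm) be a differentiable curve with u'(t) = 𝕃(t)(u(t)) for all t ∈ [s,T], and suppose 0 ≤ u(s)(x) ≤ 1 for all x ∈ K_N. Then 0 ≤ u(t)(x) ≤ 1 for all t ∈ [s,T] and all x ∈ K_N. -/

import Mathlib

open MeasureTheory Set
open scoped ENNReal NNReal

noncomputable section

/-- The closed ball `{x : ℚ_p | |x - I|_p ≤ p^(-N)}`. -/
def pBall (p : ℕ) [Fact p.Prime] (N : ℤ) (I : ℚ_[p]) : Set ℚ_[p] :=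
  {x : ℚ_[p] | ‖x - I‖ ≤ (p : ℝ) ^ (-N)}

/-- The indicator function of the ball `pBall p N I`, as a `ℂ`-valued function. -/
def indic (p : ℕ) [Fact p.Prime] (N : ℤ) (I : ℚ_[p]) : ℚ_[p] → ℂ :=
  (pBall p N I).indicator 1

/-- `K_N`, the disjoint union of the balls around the vertices. -/
def KN (p : ℕ) [Fact p.Prime] (N : ℤ) (V : Finset ℚ_[p]) : Set ℚ_[p] :=
  ⋃ I ∈ V, pBall p N I

/-- The kernel `A(x,y) = p^N ∑_{I,J ∈ V} A_{IJ} 1_{B_I}(x) 1_{B_J}(y)`. -/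
def zker (p : ℕ) [Fact p.Prime] (N : ℤ) (V : Finset ℚ_[p]) (A : ℚ_[p] → ℚ_[p] → ℂ)
    (x y : ℚ_[p]) : ℂ :=
  (p : ℂ) ^ N * ∑ I ∈ V, ∑ J ∈ V, A I J * indic p N I x * indic p N J y

/-- The degree `γ_I = ∑_{J ∈ V} A_{IJ}`. -/
def deg (p : ℕ) [Fact p.Prime] (V : Finset ℚ_[p]) (A : ℚ_[p] → ℚ_[p] → ℂ) (I : ℚ_[p]) : ℂ :=
  ∑ J ∈ V, A I J

/-- The degree function `γ(x) = ∑_{I ∈ V} γ_I 1_{B_I}(x)`. -/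
def degFun (p : ℕ) [Fact p.Prime] (N : ℤ) (V : Finset ℚ_[p]) (A : ℚ_[p] → ℚ_[p] → ℂ)
    (x : ℚ_[p]) : ℂ :=
  ∑ I ∈ V, deg p V A I * indic p N I x

/-- The Zúñiga operator `𝒜u(x) = ∫_{K_N} A(x,y) u(y) dμ(y)`. -/
def zop (p : ℕ) [Fact p.Prime] (N : ℤ) (V : Finset ℚ_[p]) (A : ℚ_[p] → ℚ_[p] → ℂ)
    [MeasurableSpace ℚ_[p]] (μ : Measure ℚ_[p]) (u : ℚ_[p] → ℂ) (x : ℚ_[p]) : ℂ :=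
  ∫ y in KN p N V, zker p N V A x y * u y ∂μ

/-- The Zúñiga Laplacian `𝕃u = 𝒜u - γ·u`. -/
def lapOp (p : ℕ) [Fact p.Prime] (N : ℤ) (V : Finset ℚ_[p]) (A : ℚ_[p] → ℚ_[p] → ℂ)
    [MeasurableSpace ℚ_[p]] (μ : Measure ℚ_[p]) (u : ℚ_[p] → ℂ) (x : ℚ_[p]) : ℂ :=
  zop p N V A μ u x - degFun p N V A x * u x

open scoped Classical in
/-- The kernel `L(x,y) = p^N ∑_{I,J ∈ V} (A_{IJ} - γ_I δ_{IJ}) 1_{B_I}(x) 1_{B_J}(y)`. -/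
def lker (p : ℕ) [Fact p.Prime] (N : ℤ) (V : Finset ℚ_[p]) (A : ℚ_[p] → ℚ_[p] → ℂ)
    (x y : ℚ_[p]) : ℂ :=
  (p : ℂ) ^ N * ∑ I ∈ V, ∑ J ∈ V,
    (A I J - if I = J then deg p V A I else 0) * indic p N I x * indic p N J y

/-- The integral operator `ℒu(x) = ∫_{K_N} L(x,y) u(y) dμ(y)`. -/
def lop (p : ℕ) [Fact p.Prime] (N : ℤ) (V : Finset ℚ_[p]) (A : ℚ_[p] → ℚ_[p] → ℂ)
    [MeasurableSpace ℚ_[p]] (μ : Measure ℚ_[p]) (u : ℚ_[p] → ℂ) (x : ℚ_[p]) : ℂ :=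
  ∫ y in KN p N V, lker p N V A x y * u y ∂μ

/-- Pairwise disjointness of the vertex balls. -/
def BallsDisjoint (p : ℕ) [Fact p.Prime] (N : ℤ) (V : Finset ℚ_[p]) : Prop :=
  (V : Set ℚ_[p]).Pairwise fun I J => Disjoint (pBall p N I) (pBall p N J)

/-- The indicator function of `pBall p N I`, as an `ℝ`-valued function. -/
def indicR (p : ℕ) [Fact p.Prime] (N : ℤ) (I : ℚ_[p]) : ℚ_[p] → ℝ :=
  (pBall p N I).indicator 1

/-- The real kernel `A(x,y,t)` of a real matrix `A`. -/
def zkerR (p : ℕ) [Fact p.Prime] (N : ℤ) (V : Finset ℚ_[p]) (A : ℚ_[p] → ℚ_[p] → ℝ)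
    (x y : ℚ_[p]) : ℝ :=
  (p : ℝ) ^ N * ∑ I ∈ V, ∑ J ∈ V, A I J * indicR p N I x * indicR p N J y

/-- The real degree function `γ(x) = ∑_{I ∈ V} (∑_{J ∈ V} A_{IJ}) 1_{B_I}(x)`. -/
def degFunR (p : ℕ) [Fact p.Prime] (N : ℤ) (V : Finset ℚ_[p]) (A : ℚ_[p] → ℚ_[p] → ℝ)
    (x : ℚ_[p]) : ℝ :=
  ∑ I ∈ V, (∑ J ∈ V, A I J) * indicR p N I x

open scoped Classical in
/-- Extension by zero of a function on `K_N` to all of `ℚ_p`. -/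
def extendZero (p : ℕ) [Fact p.Prime] (N : ℤ) (V : Finset ℚ_[p])
    (f : C(KN p N V, ℝ)) : ℚ_[p] → ℝ :=
  fun y => if h : y ∈ KN p N V then f ⟨y, h⟩ else 0

/-! At a minimum point `x₀` of `f`, the Laplacian is
`𝕃f(x₀) = ∫ A(x₀,y) (f(y) - f(x₀)) dμ(y) ≥ 0`, because `A ≥ 0` and `∫_{K_N} A(x,y) dμ(y) = γ(x)`
(each ball `B_J` has Haar measure `p^{-N}`); dually `𝕃f ≤ 0` at a maximum point. A curve in `C(K, ℝ)` whose derivative is nonnegative at the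
minimum points of its current value stays nonnegative: after adding `δ (1 + (t - s))`, at the first
time its minimum reaches `0` the left derivative at a minimum point would be both `> 0` and `≤ 0`.
Apply this to `u` and to `1 - u`. -/

theorem HasDerivWithinAt.nonpos_of_isMinOn_Icc {f : ℝ → ℝ} {f' a b : ℝ} (hab : a < b)
    (hf : HasDerivWithinAt f f' (Icc a b) b) (hmin : IsMinOn f (Icc a b) b) : f' ≤ 0 := by
  have hcone : a - b ∈ posTangentConeAt (Icc a b) b :=
    sub_mem_posTangentConeAt_of_segment_subset (segment_symm ℝ a b ▸ segment_subset_Icc hab.le)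
  have := hmin.localize.hasFDerivWithinAt_nonneg hf.hasFDerivWithinAt hcone
  rw [ContinuousLinearMap.toSpanSingleton_apply, smul_eq_mul] at this
  nlinarith

namespace ContinuousMap

variable {K : Type*} [TopologicalSpace K] [CompactSpace K]

theorem exists_apply_eq_iInf [Nonempty K] (f : C(K, ℝ)) : ∃ x, f x = ⨅ y, f y :=
  (isCompact_range f.continuous).sInf_mem (range_nonempty f)

theorem iInf_le_apply (f : C(K, ℝ)) (x : K) : ⨅ y, f y ≤ f x :=
  ciInf_le (isCompact_range f.continuous).bddBelow x

theorem lipschitzWith_iInf [Nonempty K] : LipschitzWith 1 fun f : C(K, ℝ) => ⨅ x, f x := by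
  refine LipschitzWith.of_le_add fun f g => ?_
  obtain ⟨x, hx⟩ := g.exists_apply_eq_iInf
  calc ⨅ y, f y ≤ f x := f.iInf_le_apply x
    _ ≤ g x + dist f g := by
      have := (dist_apply_le_dist (f := f) (g := g) x)
      rw [Real.dist_eq] at this
      linarith [le_abs_self (f x - g x)]
    _ = (⨅ y, g y) + dist f g := by rw [hx]

variable {v : ℝ → C(K, ℝ)} {s T : ℝ}

theorem pos_of_deriv_pos_at_min
    (hv : ∀ t ∈ Icc s T, ∃ d : C(K, ℝ), HasDerivWithinAt v d (Icc s T) t ∧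
      ∀ x, (∀ y, v t x ≤ v t y) → 0 < d x)
    (hs : ∀ x, 0 < v s x) : ∀ t ∈ Icc s T, ∀ x, 0 < v t x := by
  by_contra! ⟨t₁, ht₁, x₁, hx₁⟩
  have : Nonempty K := ⟨x₁⟩
  set m : ℝ → ℝ := fun t => ⨅ x, v t x
  have hm : ContinuousOn m (Icc s T) := lipschitzWith_iInf.continuous.comp_continuousOn
    fun t ht => (hv t ht).choose_spec.1.continuousWithinAt
  set S := Icc s T ∩ m ⁻¹' Iic 0
  have hS_bdd : BddBelow S := ⟨s, fun t ht => ht.1.1⟩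
  have ht₀ : sInf S ∈ S := (hm.preimage_isClosed_of_isClosed isClosed_Icc isClosed_Iic).csInf_mem
    ⟨t₁, ht₁, ((v t₁).iInf_le_apply x₁).trans hx₁⟩ hS_bdd
  set t₀ := sInf S
  have hm_pos : ∀ t ∈ Ico s t₀, 0 < m t := fun t ht => not_le.1 fun hle =>
    ht.2.not_ge (csInf_le hS_bdd ⟨⟨ht.1, ht.2.le.trans ht₀.1.2⟩, hle⟩)
  obtain ⟨x₀, hx₀⟩ := (v t₀).exists_apply_eq_iInf
  have hst₀ : s < t₀ := by
    refine ht₀.1.1.lt_of_ne fun hst => ?_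
    obtain ⟨x, hx⟩ := (v s).exists_apply_eq_iInf
    have := ht₀.2
    simp only [mem_preimage, mem_Iic, m, ← hst, ← hx] at this
    exact (hs x).not_ge this
  obtain ⟨d, hd, hd_pos⟩ := hv t₀ ht₀.1
  refine (hd_pos x₀ fun y => hx₀ ▸ (v t₀).iInf_le_apply y).not_ge ?_
  have hd₀ : HasDerivWithinAt (fun t => v t x₀) (d x₀) (Icc s t₀) t₀ :=
    ((evalCLM (M := ℝ) ℝ x₀).hasFDerivAt.comp_hasDerivWithinAt t₀ hd).mono
      (Icc_subset_Icc_right ht₀.1.2)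
  refine hd₀.nonpos_of_isMinOn_Icc hst₀ (isMinOn_iff.2 fun t ht => ?_)
  rcases ht.2.lt_or_eq with hlt | rfl
  · have hm₀ : m t₀ ≤ 0 := ht₀.2
    linarith [hm_pos t ⟨ht.1, hlt⟩, (v t).iInf_le_apply x₀, hx₀]
  · exact le_rfl

theorem nonneg_of_deriv_nonneg_at_min
    (hv : ∀ t ∈ Icc s T, ∃ d : C(K, ℝ), HasDerivWithinAt v d (Icc s T) t ∧
      ∀ x, (∀ y, v t x ≤ v t y) → 0 ≤ d x)
    (hs : ∀ x, 0 ≤ v s x) : ∀ t ∈ Icc s T, ∀ x, 0 ≤ v t x := by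
  have hpert : ∀ δ > 0, ∀ t ∈ Icc s T, ∀ x, 0 < v t x + δ * (1 + (t - s)) := by
    intro δ hδ
    have hφ (t : ℝ) : HasDerivAt (fun τ => (δ * (1 + (τ - s))) • (1 : C(K, ℝ))) (δ • 1) t := by
      simpa using
        (((hasDerivAt_id t).sub_const s).const_add 1 |>.const_mul δ).smul_const (1 : C(K, ℝ))
    have := pos_of_deriv_pos_at_min (v := fun t => v t + (δ * (1 + (t - s))) • 1) (s := s) (T := T)
      (fun t ht => ?_) (fun x => ?_)
    · simpa using this
    · obtain ⟨d, hd, hd_nonneg⟩ := hv t ht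
      refine ⟨d + δ • 1, hd.add (hφ t).hasDerivWithinAt, fun x hx => ?_⟩
      have := hd_nonneg x fun y => by simpa using hx y
      simp only [add_apply, smul_apply, one_apply, smul_eq_mul, mul_one]
      linarith
    · simpa using add_pos_of_nonneg_of_pos (hs x) hδ
  intro t ht x
  refine le_of_forall_pos_lt_add fun ε hε => ?_
  have hc : 0 < 1 + (t - s) := by linarith [ht.1]
  simpa [div_mul_cancel₀ _ hc.ne'] using hpert (ε / (1 + (t - s))) (div_pos hε hc) t ht x

end ContinuousMap

namespace Padic

variable {p : ℕ} [Fact p.Prime]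

theorem exists_lt_norm_sub_natCast_lt_one {x : ℚ_[p]} (hx : ‖x‖ ≤ 1) :
    ∃ k < p, ‖x - k‖ < 1 := by
  obtain ⟨k, hk, hmem⟩ := PadicInt.exists_mem_range (⟨x, hx⟩ : ℤ_[p])
  exact ⟨k, hk, PadicInt.mem_nonunits.1 hmem⟩

theorem natCast_eq_of_norm_sub_lt_one {k l : ℕ} (hk : k < p) (hl : l < p)
    (h : ‖(k - l : ℚ_[p])‖ < 1) : k = l := by
  have hdvd : (p : ℤ) ∣ (l : ℤ) - k := by
    rw [← Padic.norm_intCast_lt_one_iff, ← norm_neg]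
    push_cast
    simpa using h
  exact Nat.ModEq.eq_of_lt_of_lt (Nat.modEq_iff_dvd.2 hdvd) hk hl

end Padic

section Balls

variable {p : ℕ} [Fact p.Prime]

theorem pBall_eq_closedBall (N : ℤ) (I : ℚ_[p]) :
    pBall p N I = Metric.closedBall I ((p : ℝ) ^ (-N)) := rfl

theorem isClopen_pBall (N : ℤ) (I : ℚ_[p]) : IsClopen (pBall p N I) :=
  IsUltrametricDist.isClopen_closedBall I
    (zpow_pos (by exact_mod_cast (Fact.out : p.Prime).pos) _).ne'

theorem mem_pBall_iff_norm_mul_le_one {N : ℤ} {c x : ℚ_[p]} :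
    x ∈ pBall p N c ↔ ‖(x - c) * p ^ (-N)‖ ≤ 1 := by
  have hp : (0 : ℝ) < p := by exact_mod_cast (Fact.out : p.Prime).pos
  rw [norm_mul, Padic.norm_p_zpow, neg_neg, ← le_div_iff₀ (zpow_pos hp N), one_div, ← zpow_neg]
  rfl

theorem mem_pBall_succ_iff {N : ℤ} {c x : ℚ_[p]} {k : ℕ} :
    x ∈ pBall p (N + 1) (c + k * p ^ N) ↔ ‖(x - c) * p ^ (-N) - k‖ < 1 := by
  have hp : (0 : ℝ) < p := by exact_mod_cast (Fact.out : p.Prime).pos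
  have hpN : (p : ℚ_[p]) ^ N ≠ 0 := zpow_ne_zero _ (by exact_mod_cast hp.ne')
  have hx : x - (c + k * p ^ N) = ((x - c) * p ^ (-N) - k) * p ^ N := by
    rw [sub_mul, mul_assoc, zpow_neg, inv_mul_cancel₀ hpN]; ring
  rw [show (1 : ℝ) = (p : ℝ) ^ ((-1 : ℤ) + 1) by simp,
    ← Padic.norm_le_pow_iff_norm_lt_pow_add_one, pBall, mem_ofPred_eq, hx, norm_mul,
    Padic.norm_p_zpow, neg_add, zpow_add₀ hp.ne', mul_comm ((p : ℝ) ^ (-N))]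
  exact mul_le_mul_iff_left₀ (zpow_pos hp _)

theorem pBall_eq_biUnion_pBall_succ (N : ℤ) (c : ℚ_[p]) :
    pBall p N c = ⋃ k ∈ Finset.range p, pBall p (N + 1) (c + k * p ^ N) := by
  ext x
  simp only [mem_iUnion, Finset.mem_range, exists_prop, mem_pBall_succ_iff]
  rw [mem_pBall_iff_norm_mul_le_one]
  constructor
  · exact Padic.exists_lt_norm_sub_natCast_lt_one
  · rintro ⟨k, -, hk⟩
    calc ‖(x - c) * p ^ (-N)‖ = ‖((x - c) * p ^ (-N) - k) + k‖ := by rw [sub_add_cancel]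
      _ ≤ max ‖(x - c) * p ^ (-N) - k‖ ‖(k : ℚ_[p])‖ := IsUltrametricDist.norm_add_le_max _ _
      _ ≤ 1 := max_le hk.le (by simpa using Padic.norm_int_le_one (p := p) k)

theorem pairwiseDisjoint_pBall_succ (N : ℤ) (c : ℚ_[p]) :
    (Finset.range p : Set ℕ).PairwiseDisjoint fun k => pBall p (N + 1) (c + k * p ^ N) := by
  intro k hk l hl hkl
  refine Set.disjoint_left.2 fun x hxk hxl => hkl ?_
  rw [mem_pBall_succ_iff] at hxk hxl
  refine Padic.natCast_eq_of_norm_sub_lt_one (by simpa using hk) (by simpa using hl) ?_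
  set y := (x - c) * (p : ℚ_[p]) ^ (-N)
  calc ‖(k - l : ℚ_[p])‖ = dist (k : ℚ_[p]) l := (dist_eq_norm _ _).symm
    _ ≤ max (dist (k : ℚ_[p]) y) (dist y l) := dist_triangle_max _ _ _
    _ < 1 := by rw [dist_comm, dist_eq_norm, dist_eq_norm]; exact max_lt hxk hxl

end Balls

section Measure

variable {p : ℕ} [Fact p.Prime] [MeasurableSpace ℚ_[p]] [BorelSpace ℚ_[p]]
  (μ : Measure ℚ_[p]) [μ.IsAddHaarMeasure]

theorem measure_pBall_eq_mul_succ (N : ℤ) (c : ℚ_[p]) :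
    μ (pBall p N c) = p * μ (pBall p (N + 1) 0) := by
  rw [pBall_eq_biUnion_pBall_succ N c, measure_biUnion_finset (pairwiseDisjoint_pBall_succ N c)
    fun k _ => (isClopen_pBall _ _).isClosed.measurableSet]
  simp [pBall_eq_closedBall, Measure.addHaar_closedBall_center μ]

theorem measure_pBall (hnorm : μ {x : ℚ_[p] | ‖x‖ ≤ 1} = 1) (N : ℤ) (I : ℚ_[p]) :
    μ (pBall p N I) = (p : ℝ≥0∞) ^ (-N) := by
  have hp : (p : ℝ≥0∞) ≠ 0 := by exact_mod_cast (Fact.out : p.Prime).ne_zero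
  have hmul (n : ℤ) : (p : ℝ≥0∞) * p ^ n = p ^ (n + 1) := by
    rw [ENNReal.zpow_add hp (ENNReal.natCast_ne_top p), zpow_one, mul_comm]
  rw [pBall_eq_closedBall, Measure.addHaar_closedBall_center μ, ← pBall_eq_closedBall]
  induction N using Int.induction_on with
  | zero => simpa [pBall] using hnorm
  | succ i ih =>
    refine (ENNReal.mul_right_inj hp (ENNReal.natCast_ne_top p)).1 ?_
    rw [← measure_pBall_eq_mul_succ, ih, hmul]
    ring_nf
  | pred i ih =>
    rw [measure_pBall_eq_mul_succ μ, sub_add_cancel, ih, hmul]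
    ring_nf

theorem measureReal_pBall (hnorm : μ {x : ℚ_[p] | ‖x‖ ≤ 1} = 1) (N : ℤ) (I : ℚ_[p]) :
    μ.real (pBall p N I) = (p : ℝ) ^ (-N) := by
  rw [measureReal_def, measure_pBall μ hnorm, ← ENNReal.coe_natCast,
    ← ENNReal.coe_zpow (by exact_mod_cast (Fact.out : p.Prime).ne_zero), ENNReal.coe_toReal,
    NNReal.coe_zpow, NNReal.coe_natCast]

end Measure

section Kernel

variable {p : ℕ} [Fact p.Prime] {N : ℤ} {V : Finset ℚ_[p]}

theorem continuous_indicR (N : ℤ) (I : ℚ_[p]) : Continuous (indicR p N I) :=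
  continuous_indicator (by simp [(isClopen_pBall N I).frontier_eq]) continuousOn_const

theorem indicR_nonneg (N : ℤ) (I x : ℚ_[p]) : 0 ≤ indicR p N I x :=
  indicator_nonneg (fun _ _ => zero_le_one) x

theorem continuous_zkerR (a : ℚ_[p] → ℚ_[p] → ℝ) (x : ℚ_[p]) : Continuous (zkerR p N V a x) :=
  continuous_const.mul <| continuous_finsetSum _ fun _ _ => continuous_finsetSum _ fun J _ =>
    continuous_const.mul (continuous_indicR N J)

theorem zkerR_nonneg {a : ℚ_[p] → ℚ_[p] → ℝ} (ha : ∀ I ∈ V, ∀ J ∈ V, 0 ≤ a I J) (x y : ℚ_[p]) :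
    0 ≤ zkerR p N V a x y :=
  mul_nonneg (by positivity) <| Finset.sum_nonneg fun I hI => Finset.sum_nonneg fun J hJ =>
    mul_nonneg (mul_nonneg (ha I hI J hJ) (indicR_nonneg N I x)) (indicR_nonneg N J y)

theorem pBall_subset_KN {I : ℚ_[p]} (hI : I ∈ V) : pBall p N I ⊆ KN p N V :=
  subset_biUnion_of_mem (u := pBall p N) hI

theorem extendZero_of_mem (f : C(KN p N V, ℝ)) {y : ℚ_[p]} (hy : y ∈ KN p N V) :
    extendZero p N V f y = f ⟨y, hy⟩ :=
  dif_pos hy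

theorem continuousOn_extendZero (f : C(KN p N V, ℝ)) :
    ContinuousOn (extendZero p N V f) (KN p N V) := by
  rw [continuousOn_iff_continuous_domRestrict]
  convert f.continuous using 1
  ext y
  exact extendZero_of_mem f y.2

variable [MeasurableSpace ℚ_[p]] [BorelSpace ℚ_[p]] (μ : Measure ℚ_[p]) [μ.IsAddHaarMeasure]

theorem measurableSet_KN (N : ℤ) (V : Finset ℚ_[p]) : MeasurableSet (KN p N V) :=
  .biUnion V.countable_toSet fun I _ => (isClopen_pBall N I).isClosed.measurableSet

theorem setIntegral_indicR (hnorm : μ {x : ℚ_[p] | ‖x‖ ≤ 1} = 1) {J : ℚ_[p]} (hJ : J ∈ V) :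
    ∫ y in KN p N V, indicR p N J y ∂μ = (p : ℝ) ^ (-N) := by
  rw [indicR, integral_indicator_one (isClopen_pBall N J).isClosed.measurableSet,
    measureReal_restrict_apply (isClopen_pBall N J).isClosed.measurableSet,
    inter_eq_left.2 (pBall_subset_KN hJ), measureReal_pBall μ hnorm]

variable [CompactSpace (KN p N V)]

theorem integrableOn_KN_of_continuousOn {g : ℚ_[p] → ℝ} (hg : ContinuousOn g (KN p N V)) :
    IntegrableOn g (KN p N V) μ :=
  hg.integrableOn_compact (isCompact_iff_compactSpace.mpr ‹_›)

theorem setIntegral_zkerR (hnorm : μ {x : ℚ_[p] | ‖x‖ ≤ 1} = 1) (a : ℚ_[p] → ℚ_[p] → ℝ)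
    (x : ℚ_[p]) : ∫ y in KN p N V, zkerR p N V a x y ∂μ = degFunR p N V a x := by
  have hint (c : ℝ) (J : ℚ_[p]) :
      Integrable (fun y => c * indicR p N J y) (μ.restrict (KN p N V)) :=
    integrableOn_KN_of_continuousOn μ (continuous_const.mul (continuous_indicR N J)).continuousOn
  have hp : (p : ℝ) ^ N * (p : ℝ) ^ (-N) = 1 := by
    rw [← zpow_add₀ (by exact_mod_cast (Fact.out : p.Prime).ne_zero), add_neg_cancel, zpow_zero]
  simp_rw [zkerR, integral_const_mul]
  rw [integral_finsetSum _ fun I _ => integrable_finsetSum _ fun J _ => hint _ J]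
  simp_rw [integral_finsetSum _ fun J _ => hint _ J, integral_const_mul]
  rw [degFunR, Finset.mul_sum]
  refine Finset.sum_congr rfl fun I _ => ?_
  rw [Finset.sum_congr rfl fun J hJ => by rw [setIntegral_indicR μ hnorm hJ], ← Finset.sum_mul,
    ← Finset.sum_mul]
  linear_combination ((∑ J ∈ V, a I J) * indicR p N I x) * hp

theorem integrableOn_zkerR_mul_extendZero (a : ℚ_[p] → ℚ_[p] → ℝ) (x : ℚ_[p])
    (f : C(KN p N V, ℝ)) :
    IntegrableOn (fun y => zkerR p N V a x y * extendZero p N V f y) (KN p N V) μ :=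
  integrableOn_KN_of_continuousOn μ
    ((continuous_zkerR a x).continuousOn.mul (continuousOn_extendZero f))

theorem degFunR_mul_le_setIntegral_zkerR_mul (hnorm : μ {x : ℚ_[p] | ‖x‖ ≤ 1} = 1)
    {a : ℚ_[p] → ℚ_[p] → ℝ} (ha : ∀ I ∈ V, ∀ J ∈ V, 0 ≤ a I J) {f : C(KN p N V, ℝ)} {c : ℝ}
    (hc : ∀ y, c ≤ f y) (x : ℚ_[p]) :
    degFunR p N V a x * c ≤ ∫ y in KN p N V, zkerR p N V a x y * extendZero p N V f y ∂μ := by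
  rw [← setIntegral_zkerR μ hnorm, ← integral_mul_const]
  refine setIntegral_mono_on
    ((integrableOn_KN_of_continuousOn μ (continuous_zkerR a x).continuousOn).mul_const c)
    (integrableOn_zkerR_mul_extendZero μ a x f) (measurableSet_KN N V) fun y hy => ?_
  rw [extendZero_of_mem f hy]
  exact mul_le_mul_of_nonneg_left (hc _) (zkerR_nonneg ha x y)

theorem setIntegral_zkerR_mul_le (hnorm : μ {x : ℚ_[p] | ‖x‖ ≤ 1} = 1)
    {a : ℚ_[p] → ℚ_[p] → ℝ} (ha : ∀ I ∈ V, ∀ J ∈ V, 0 ≤ a I J) {f : C(KN p N V, ℝ)} {c : ℝ}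
    (hc : ∀ y, f y ≤ c) (x : ℚ_[p]) :
    ∫ y in KN p N V, zkerR p N V a x y * extendZero p N V f y ∂μ ≤ degFunR p N V a x * c := by
  rw [← setIntegral_zkerR μ hnorm, ← integral_mul_const]
  refine setIntegral_mono_on (integrableOn_zkerR_mul_extendZero μ a x f)
    ((integrableOn_KN_of_continuousOn μ (continuous_zkerR a x).continuousOn).mul_const c)
    (measurableSet_KN N V) fun y hy => ?_
  rw [extendZero_of_mem f hy]
  exact mul_le_mul_of_nonneg_left (hc _) (zkerR_nonneg ha x y)

end Kernel

def lapOpR (p : ℕ) [Fact p.Prime] (N : ℤ) (V : Finset ℚ_[p]) [MeasurableSpace ℚ_[p]]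
    (μ : Measure ℚ_[p]) (a : ℚ_[p] → ℚ_[p] → ℝ) (f : C(KN p N V, ℝ)) (x : KN p N V) : ℝ :=
  (∫ y in KN p N V, zkerR p N V a x y * extendZero p N V f y ∂μ) - degFunR p N V a x * f x

section Laplacian

variable {p : ℕ} [Fact p.Prime] {N : ℤ} {V : Finset ℚ_[p]} [MeasurableSpace ℚ_[p]]
  [BorelSpace ℚ_[p]] {μ : Measure ℚ_[p]} [μ.IsAddHaarMeasure] [CompactSpace (KN p N V)]
  {a : ℚ_[p] → ℚ_[p] → ℝ} {f : C(KN p N V, ℝ)} {x : KN p N V}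

theorem lapOpR_nonneg_of_isMin (hnorm : μ {x : ℚ_[p] | ‖x‖ ≤ 1} = 1)
    (ha : ∀ I ∈ V, ∀ J ∈ V, 0 ≤ a I J) (hx : ∀ y, f x ≤ f y) : 0 ≤ lapOpR p N V μ a f x :=
  sub_nonneg.2 (degFunR_mul_le_setIntegral_zkerR_mul μ hnorm ha hx x)

theorem lapOpR_nonpos_of_isMax (hnorm : μ {x : ℚ_[p] | ‖x‖ ≤ 1} = 1)
    (ha : ∀ I ∈ V, ∀ J ∈ V, 0 ≤ a I J) (hx : ∀ y, f y ≤ f x) : lapOpR p N V μ a f x ≤ 0 :=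
  sub_nonpos.2 (setIntegral_zkerR_mul_le μ hnorm ha hx x)

end Laplacian

theorem heat_flow_preserves_unit_interval_general (p : ℕ) [Fact p.Prime]
    [MeasurableSpace ℚ_[p]] [BorelSpace ℚ_[p]]
    (μ : Measure ℚ_[p]) [μ.IsAddHaarMeasure]
    (hnorm : μ {x : ℚ_[p] | ‖x‖ ≤ 1} = 1)
    (N : ℤ) (V : Finset ℚ_[p])
    [CompactSpace (KN p N V)]
    (A : ℝ → ℚ_[p] → ℚ_[p] → ℝ)
    (hpos : ∀ t, 0 ≤ t → ∀ I ∈ V, ∀ J ∈ V, 0 ≤ A t I J)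
    (s T : ℝ) (hs : 0 ≤ s)
    (u : ℝ → C(KN p N V, ℝ))
    (hderiv : ∀ t ∈ Set.Icc s T, ∃ d : C(KN p N V, ℝ),
      HasDerivWithinAt u d (Set.Icc s T) t ∧
      ∀ x : KN p N V, d x =
        (∫ y in KN p N V, zkerR p N V (A t) (x : ℚ_[p]) y * extendZero p N V (u t) y ∂μ)
          - degFunR p N V (A t) (x : ℚ_[p]) * u t x)
    (hinit : ∀ x : KN p N V, 0 ≤ u s x ∧ u s x ≤ 1) :
    ∀ t ∈ Set.Icc s T, ∀ x : KN p N V, 0 ≤ u t x ∧ u t x ≤ 1 := by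
  have hA (t : ℝ) (ht : t ∈ Icc s T) : ∀ I ∈ V, ∀ J ∈ V, 0 ≤ A t I J := hpos t (hs.trans ht.1)
  have hL : ∀ t ∈ Icc s T, ∃ d : C(KN p N V, ℝ), HasDerivWithinAt u d (Icc s T) t ∧
      ∀ x, d x = lapOpR p N V μ (A t) (u t) x := hderiv
  have hu : ∀ t ∈ Icc s T, ∀ x, 0 ≤ u t x := by
    refine ContinuousMap.nonneg_of_deriv_nonneg_at_min (fun t ht => ?_) fun x => (hinit x).1
    obtain ⟨d, hd, hd_eq⟩ := hL t ht
    refine ⟨d, hd, fun x hx => ?_⟩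
    rw [hd_eq]
    exact lapOpR_nonneg_of_isMin hnorm (hA t ht) hx
  have hu' : ∀ t ∈ Icc s T, ∀ x, 0 ≤ (1 - u t) x := by
    refine ContinuousMap.nonneg_of_deriv_nonneg_at_min (fun t ht => ?_) fun x => by
      simpa using (hinit x).2
    obtain ⟨d, hd, hd_eq⟩ := hL t ht
    refine ⟨-d, hd.const_sub 1, fun x hx => ?_⟩
    have hmax (y : KN p N V) : u t y ≤ u t x := by
      have := hx y
      simp only [ContinuousMap.sub_apply, ContinuousMap.one_apply] at this
      linarith
    simpa [hd_eq] using lapOpR_nonpos_of_isMax hnorm (hA t ht) hmax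
  exact fun t ht x => ⟨hu t ht x, by simpa using hu' t ht x⟩

/-- (Maximum principle / Feller property.) Suppose the entries
`A_{IJ}(t)` are real, nonnegative and continuous in `t`. If `u : [s,T] → C(K_N, ℝ)` is
a differentiable curve (sup norm) with `u'(t) = 𝕃(t)(u(t))` and `0 ≤ u(s) ≤ 1`
pointwise, then `0 ≤ u(t) ≤ 1` pointwise for all `t ∈ [s,T]`. -/
theorem heat_flow_preserves_unit_interval (p : ℕ) [Fact p.Prime]
    [MeasurableSpace ℚ_[p]] [BorelSpace ℚ_[p]]
    (μ : Measure ℚ_[p]) [μ.IsAddHaarMeasure]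
    (hnorm : μ {x : ℚ_[p] | ‖x‖ ≤ 1} = 1)
    (N : ℤ) (V : Finset ℚ_[p]) (hdisj : BallsDisjoint p N V)
    [CompactSpace (KN p N V)]
    (A : ℝ → ℚ_[p] → ℚ_[p] → ℝ)
    (hpos : ∀ t, 0 ≤ t → ∀ I ∈ V, ∀ J ∈ V, 0 ≤ A t I J)
    (hA : ∀ I ∈ V, ∀ J ∈ V, ContinuousOn (fun t => A t I J) (Set.Ici 0))
    (s T : ℝ) (hs : 0 ≤ s) (hsT : s ≤ T)
    (u : ℝ → C(KN p N V, ℝ))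
    (hderiv : ∀ t ∈ Set.Icc s T, ∃ d : C(KN p N V, ℝ),
      HasDerivWithinAt u d (Set.Icc s T) t ∧
      ∀ x : KN p N V, d x =
        (∫ y in KN p N V, zkerR p N V (A t) (x : ℚ_[p]) y * extendZero p N V (u t) y ∂μ)
          - degFunR p N V (A t) (x : ℚ_[p]) * u t x)
    (hinit : ∀ x : KN p N V, 0 ≤ u s x ∧ u s x ≤ 1) :
    ∀ t ∈ Set.Icc s T, ∀ x : KN p N V, 0 ≤ u t x ∧ u t x ≤ 1 :=
  heat_flow_preserves_unit_interval_general p μ hnorm N V A hpos s T hs u hderiv hinit
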